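/- arXiv:2305.06835 — 3 statements merged into one kernel-verified Lean document; each statement's English description precedes it below -/
import Mathlib

section
/- Suppose u is a monic monomial of degree d in R and t ≥ 0 is an integer such that the iterates u, σ(u), …, σ^{t−1}(u) of the step map are all defined (i.e., none of them is a sink of the reduction graph G_{B,d}), and set w = σ^t(u). For i = 1,…,n let r_i be the number of indices 0 ≤ s < t such that the edge leaving σ^s(u) has label i. Then (∏_{i=1}^n a_i^{r_i})·u − (∏_{i=1}^n b_i^{r_i})·w belongs to the ideal of R generated by those f_i with r_i > 0; in particular it belongs to the ideal (f_1,…,f_n). -/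
open MvPolynomial

/-- `i` is the least index such that `x_i^{d i}` divides the monomial with exponent
vector `α` (divisibility meaning `d i ≤ α i`). -/
def IsLeastLabel {n : ℕ} (d : Fin n → ℕ) (α : Fin n →₀ ℕ) (i : Fin n) : Prop :=
  d i ≤ α i ∧ ∀ j : Fin n, j < i → α j < d j

/-- One step of the reduction graph `G_{B,d}`: there is an `i`-labeled edge from the
monomial with exponent vector `α` to the one with exponent vector `β`, i.e. `i` is the
least index with `x_i^{d i} ∣ x^α` and `x^β = m_i · x^α / x_i^{d i}`. -/
def StepTo {n : ℕ} (d : Fin n → ℕ) (m : Fin n → (Fin n →₀ ℕ))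
    (α : Fin n →₀ ℕ) (i : Fin n) (β : Fin n →₀ ℕ) : Prop :=
  IsLeastLabel d α i ∧ β = α - Finsupp.single i (d i) + m i

lemma step_eq {K : Type*} [Field K] {n : ℕ} (d : Fin n → ℕ) (a b : Fin n → K)
    (m : Fin n → (Fin n →₀ ℕ)) (f : Fin n → MvPolynomial (Fin n) K)
    (hf : ∀ i, f i = monomial (Finsupp.single i (d i)) (a i) - monomial (m i) (b i))
    {α : Fin n →₀ ℕ} {i : Fin n} {β : Fin n →₀ ℕ} (h : StepTo d m α i β) :
    C (a i) * monomial α (1 : K) - C (b i) * monomial β 1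
      = monomial (α - Finsupp.single i (d i)) 1 * f i := by
  obtain ⟨⟨hle, -⟩, hβ⟩ := h
  have hsle : Finsupp.single i (d i) ≤ α := Finsupp.single_le_iff.mpr hle
  have hcancel : α - Finsupp.single i (d i) + Finsupp.single i (d i) = α :=
    tsub_add_cancel_of_le hsle
  rw [hf, mul_sub, monomial_mul, monomial_mul, hcancel, hβ]
  simp [C_mul_monomial]

lemma main_aux {K : Type*} [Field K] {n : ℕ} (d : Fin n → ℕ) (a b : Fin n → K)
    (m : Fin n → (Fin n →₀ ℕ)) (f : Fin n → MvPolynomial (Fin n) K)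
    (hf : ∀ i, f i = monomial (Finsupp.single i (d i)) (a i) - monomial (m i) (b i))
    (v : ℕ → (Fin n →₀ ℕ)) (lab : ℕ → Fin n) :
    ∀ t : ℕ, (∀ s, s < t → StepTo d m (v s) (lab s) (v (s + 1))) →
      C (∏ i, a i ^ ((Finset.range t).filter (fun s => lab s = i)).card) * monomial (v 0) (1 : K)
        - C (∏ i, b i ^ ((Finset.range t).filter (fun s => lab s = i)).card) * monomial (v t) 1
      ∈ Ideal.span (f '' {i : Fin n | 0 < ((Finset.range t).filter (fun s => lab s = i)).card}) := by
  intro t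
  induction t with
  | zero => intro _; simp
  | succ t ih =>
    intro hstep
    have ih' := ih (fun s hs => hstep s (hs.trans (Nat.lt_succ_self t)))
    have hst := hstep t (Nat.lt_succ_self t)
    have hcard : ∀ j, ((Finset.range (t+1)).filter (fun s => lab s = j)).card
        = ((Finset.range t).filter (fun s => lab s = j)).card + (if lab t = j then 1 else 0) := by
      intro j
      rw [Finset.range_add_one, Finset.filter_insert]
      split
      · rw [Finset.card_insert_of_notMem (by simp)]
      · simp
    have hprod : ∀ c : Fin n → K,
        (∏ i, c i ^ ((Finset.range (t+1)).filter (fun s => lab s = i)).card)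
        = (∏ i, c i ^ ((Finset.range t).filter (fun s => lab s = i)).card) * c (lab t) := by
      intro c
      simp only [hcard, pow_add]
      rw [Finset.prod_mul_distrib]
      congr 1
      simp only [pow_ite, pow_one, pow_zero]
      rw [Finset.prod_ite_eq]
      simp
    have hsub : {i : Fin n | 0 < ((Finset.range t).filter (fun s => lab s = i)).card}
        ⊆ {i : Fin n | 0 < ((Finset.range (t+1)).filter (fun s => lab s = i)).card} := by
      intro i hi
      simp only [Set.mem_setOf_eq] at hi ⊢
      exact hi.trans_le (Finset.card_le_card (Finset.filter_subset_filter _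
        (Finset.range_subset_range.mpr (Nat.le_succ t))))
    have hmem : f (lab t) ∈ Ideal.span
        (f '' {i : Fin n | 0 < ((Finset.range (t+1)).filter (fun s => lab s = i)).card}) := by
      apply Ideal.subset_span
      refine Set.mem_image_of_mem f ?_
      simp only [Set.mem_setOf_eq, Finset.card_pos]
      exact ⟨t, by simp⟩
    have key : C (∏ i, a i ^ ((Finset.range (t+1)).filter (fun s => lab s = i)).card) * monomial (v 0) (1 : K)
        - C (∏ i, b i ^ ((Finset.range (t+1)).filter (fun s => lab s = i)).card) * monomial (v (t+1)) 1
        = C (a (lab t)) * (C (∏ i, a i ^ ((Finset.range t).filter (fun s => lab s = i)).card) * monomial (v 0) (1 : K)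
            - C (∏ i, b i ^ ((Finset.range t).filter (fun s => lab s = i)).card) * monomial (v t) 1)
          + C (∏ i, b i ^ ((Finset.range t).filter (fun s => lab s = i)).card)
            * (C (a (lab t)) * monomial (v t) (1 : K) - C (b (lab t)) * monomial (v (t+1)) 1) := by
      rw [hprod a, hprod b]
      push_cast [map_mul]
      ring
    rw [key]
    refine Ideal.add_mem _ (Ideal.mul_mem_left _ _ (Ideal.span_mono (Set.image_mono (f := f) hsub) ih')) ?_
    rw [step_eq d a b m f hf hst]
    exact Ideal.mul_mem_left _ _ (Ideal.mul_mem_left _ _ hmem)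

/-- if the path of the step map `σ` starting at a monomial `u` of degree `dd`
is defined for `t` steps (recorded by the vertex sequence `v` and the label sequence `lab`),
`w = v t = σ^t(u)`, and `r i` is the number of `i`-labeled edges along the path, then
`(∏ a i ^ r i)·x^u − (∏ b i ^ r i)·x^w` lies in the ideal generated by those `f i` with
`r i > 0`; in particular it lies in `(f 1, …, f n)`. -/
theorem stmt0 {K : Type*} [Field K] {n : ℕ} (hn : 0 < n)
    (d : Fin n → ℕ) (hd : ∀ i, 0 < d i)
    (a b : Fin n → K)
    (m : Fin n → (Fin n →₀ ℕ))
    (hmdeg : ∀ i, (∑ j, m i j) = d i)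
    (hmne : ∀ i, m i ≠ Finsupp.single i (d i))
    (f : Fin n → MvPolynomial (Fin n) K)
    (hf : ∀ i, f i = monomial (Finsupp.single i (d i)) (a i) - monomial (m i) (b i))
    (dd : ℕ) (hdd : 0 < dd)
    (u : Fin n →₀ ℕ) (hu : (∑ j, u j) = dd)
    (t : ℕ) (v : ℕ → (Fin n →₀ ℕ)) (lab : ℕ → Fin n)
    (hv0 : v 0 = u)
    (hstep : ∀ s, s < t → StepTo d m (v s) (lab s) (v (s + 1)))
    (r : Fin n → ℕ)
    (hr : ∀ i, r i = ((Finset.range t).filter (fun s => lab s = i)).card) :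
    (C (∏ i, a i ^ r i)) * monomial u (1 : K)
        - (C (∏ i, b i ^ r i)) * monomial (v t) (1 : K)
      ∈ Ideal.span (f '' {i : Fin n | 0 < r i}) ∧
    (C (∏ i, a i ^ r i)) * monomial u (1 : K)
        - (C (∏ i, b i ^ r i)) * monomial (v t) (1 : K)
      ∈ Ideal.span (Set.range f) := by

  have hreq : r = fun i => ((Finset.range t).filter (fun s => lab s = i)).card := funext hr
  subst hreq
  subst hv0
  have h1 := main_aux d a b m f hf v lab t hstep
  exact ⟨h1, Ideal.span_mono (Set.image_subset_range f _) h1⟩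
end

section
/- For any scalars a_1,…,a_n,b_1,…,b_n ∈ K with a_i ≠ 0 for all i (with NO assumption that f_1,…,f_n is a regular sequence), the ideal (f_1,…,f_n) is contained in Ann(F_B), and the images in R/Ann(F_B) of the monomials in M_{d_1,…,d_n} (monic monomials x^α with α_i < d_i for all i) span R/Ann(F_B) as a K-vector space. -/
open MvPolynomial

/-- The step map `σ` of the reduction graph: `α` is sent along its unique outgoing edge,
labeled by the least index `i` with `x_i^{d i} ∣ x^α`, to `m i · x^α / x_i^{d i}`;
sinks (monomials not divisible by any `x_i^{d i}`) are kept fixed. -/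
noncomputable def stepFn {n : ℕ} (d : Fin n → ℕ) (m : Fin n → (Fin n →₀ ℕ))
    (α : Fin n →₀ ℕ) : Fin n →₀ ℕ :=
  if h : (Finset.univ.filter (fun i => d i ≤ α i)).Nonempty then
    α - Finsupp.single ((Finset.univ.filter (fun i => d i ≤ α i)).min' h)
          (d ((Finset.univ.filter (fun i => d i ≤ α i)).min' h))
      + m ((Finset.univ.filter (fun i => d i ≤ α i)).min' h)
  else α

/-- The exponent vector `δ = (d 1 − 1, …, d n − 1)`. -/
noncomputable def deltaExp {n : ℕ} (d : Fin n → ℕ) : Fin n →₀ ℕ :=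
  Finsupp.equivFunOnFinite.symm (fun i => d i - 1)

/-- `α` reaches `δ`: some iterate of the step map starting at `α` equals `δ`. -/
def Reaches {n : ℕ} (d : Fin n → ℕ) (m : Fin n → (Fin n →₀ ℕ))
    (δ α : Fin n →₀ ℕ) : Prop :=
  ∃ t : ℕ, (stepFn d m)^[t] α = δ

/-- The first time at which the path starting at `α` hits `δ`. -/
noncomputable def hitTime {n : ℕ} (d : Fin n → ℕ) (m : Fin n → (Fin n →₀ ℕ))
    (δ α : Fin n →₀ ℕ) : ℕ :=
  sInf {t : ℕ | (stepFn d m)^[t] α = δ}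

open Classical in
/-- `r i (α)`: the number of `i`-labeled edges on the (unique) path from `α` to `δ`. -/
noncomputable def rPath {n : ℕ} (d : Fin n → ℕ) (m : Fin n → (Fin n →₀ ℕ))
    (δ α : Fin n →₀ ℕ) (i : Fin n) : ℕ :=
  ((Finset.range (hitTime d m δ α)).filter
    (fun s => IsLeastLabel d ((stepFn d m)^[s] α) i)).card

/-- `s i`: the maximal number of `i`-labeled edges on any directed path ending at `δ`. -/
noncomputable def sMax {n : ℕ} (d : Fin n → ℕ) (m : Fin n → (Fin n →₀ ℕ))
    (δ : Fin n →₀ ℕ) (i : Fin n) : ℕ :=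
  sSup ((fun α => rPath d m δ α i) '' {α : Fin n →₀ ℕ | Reaches d m δ α})

open Classical in
/-- The contraction action of `R = K[x_1,…,x_n]` on `S = K[X_1,…,X_n]`: the bilinear map
with `x^γ ∘ X^β = X^{β−γ}` if `γ ≤ β` componentwise and `0` otherwise. -/
noncomputable def contract {K : Type*} [Field K] {n : ℕ}
    (g F : MvPolynomial (Fin n) K) : MvPolynomial (Fin n) K :=
  ∑ γ ∈ g.support, ∑ β ∈ F.support,
    if γ ≤ β then monomial (β - γ) (g.coeff γ * F.coeff β) else 0

open Classical

section Graph
variable {n : ℕ} (d : Fin n → ℕ) (m : Fin n → (Fin n →₀ ℕ))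

noncomputable def rw1 (i : Fin n) (α : Fin n →₀ ℕ) : Fin n →₀ ℕ :=
  α - Finsupp.single i (d i) + m i

lemma rw1_apply (i : Fin n) (α : Fin n →₀ ℕ) (k : Fin n) :
    rw1 d m i α k = α k - (if i = k then d i else 0) + m i k := by
  simp [rw1, Finsupp.tsub_apply, Finsupp.single_apply]

lemma rw1_active_other {i j : Fin n} (hij : j ≠ i) {α : Fin n →₀ ℕ} (h : d i ≤ α i) :
    d i ≤ rw1 d m j α i := by
  rw [rw1_apply]
  simp [hij]
  omega

lemma rw1_comm {i j : Fin n} (hij : i ≠ j) {α : Fin n →₀ ℕ}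
    (hi : d i ≤ α i) (hj : d j ≤ α j) :
    rw1 d m i (rw1 d m j α) = rw1 d m j (rw1 d m i α) := by
  ext k
  simp only [rw1_apply]
  rcases eq_or_ne i k with h1 | h1
  · subst h1
    simp [Ne.symm hij]
    omega
  · rcases eq_or_ne j k with h2 | h2
    · subst h2
      simp [h1]
      omega
    · simp [h1, h2]; omega

lemma rw1_add (β : Fin n →₀ ℕ) {i : Fin n} {α : Fin n →₀ ℕ} (h : d i ≤ α i) :
    rw1 d m i (β + α) = β + rw1 d m i α := by
  ext k
  simp only [rw1_apply, Finsupp.add_apply]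
  split_ifs with h'
  · subst h'; omega
  · omega

lemma deltaExp_apply (k : Fin n) : deltaExp d k = d k - 1 := rfl

lemma delta_not_active (hd : ∀ i, 0 < d i) (i : Fin n) : ¬ d i ≤ deltaExp d i := by
  rw [deltaExp_apply]
  have := hd i
  omega

inductive RSeq : List (Fin n) → (Fin n →₀ ℕ) → (Fin n →₀ ℕ) → Prop
  | nil (α) : RSeq [] α α
  | cons {i L α β} (h : d i ≤ α i) (h2 : RSeq L (rw1 d m i α) β) : RSeq (i :: L) α β

lemma RSeq.append {L₁ L₂ : List (Fin n)} {α β γ : Fin n →₀ ℕ}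
    (h1 : RSeq d m L₁ α β) (h2 : RSeq d m L₂ β γ) : RSeq d m (L₁ ++ L₂) α γ := by
  induction h1 with
  | nil => exact h2
  | cons h h' ih => exact RSeq.cons h (ih h2)

lemma count_cons'' (k j : Fin n) (L : List (Fin n)) :
    (j :: L).count k = L.count k + (if k = j then 1 else 0) := by
  rcases eq_or_ne k j with rfl | h
  · simp [List.count_cons]
  · simp [List.count_cons, h, Ne.symm h]


lemma rseq_shift (hd : ∀ i, 0 < d i) :
    ∀ {L : List (Fin n)} {α : Fin n →₀ ℕ} {i : Fin n},
      RSeq d m L α (deltaExp d) → d i ≤ α i →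
      ∃ M, RSeq d m M (rw1 d m i α) (deltaExp d) ∧ M.length + 1 = L.length ∧
        ∀ k, M.count k + (if k = i then 1 else 0) = L.count k := by
  intro L
  induction L with
  | nil =>
    intro α i hL hi
    cases hL
    exact absurd hi (delta_not_active d hd i)
  | cons j L' ih =>
    intro α i hL hi
    cases hL with
    | cons hj h2 =>
      by_cases hji : j = i
      · subst hji
        refine ⟨L', h2, rfl, fun k => ?_⟩
        rw [count_cons'']
      · have hij : i ≠ j := fun h => hji h.symm
        have hi' : d i ≤ rw1 d m j α i := rw1_active_other d m hji hi
        obtain ⟨M', hM', hlen, hcnt⟩ := ih h2 hi'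
        refine ⟨j :: M', RSeq.cons (rw1_active_other d m hij hj) ?_, by simp [← hlen], fun k => ?_⟩
        · rw [← rw1_comm d m hij hi hj]
          exact hM'
        · rw [count_cons'', count_cons'']
          have := hcnt k
          omega

lemma no_cycle (hd : ∀ i, 0 < d i) : ∀ (N : ℕ) (w : Fin n →₀ ℕ) (L : List (Fin n)),
    L.length ≤ N → RSeq d m L w (deltaExp d) →
    ∀ C : List (Fin n), C ≠ [] → RSeq d m C w w → False := by
  intro N
  induction N with
  | zero =>
    intro w L hlen hL C hC hcyc
    cases C with
    | nil => exact hC rfl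
    | cons j C' =>
      cases hcyc with
      | cons hj h2 =>
        cases L with
        | nil => cases hL; exact absurd hj (delta_not_active d hd j)
        | cons x xs => simp at hlen
  | succ N ih =>
    intro w L hlen hL C hC hcyc
    cases C with
    | nil => exact hC rfl
    | cons j C' =>
      cases hcyc with
      | cons hj h2 =>
        obtain ⟨M, hM, hMlen, -⟩ := rseq_shift d m hd hL hj
        exact ih (rw1 d m j w) M (by omega) hM (C' ++ [j]) (by simp)
          (RSeq.append d m h2 (RSeq.cons hj (RSeq.nil _)))

abbrev activeSet (α : Fin n →₀ ℕ) : Finset (Fin n) :=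
  Finset.univ.filter (fun i => d i ≤ α i)

lemma mem_activeSet {α : Fin n →₀ ℕ} {i : Fin n} : i ∈ activeSet d α ↔ d i ≤ α i := by
  simp [activeSet]

lemma stepFn_sink {α : Fin n →₀ ℕ} (h : ¬ (activeSet d α).Nonempty) : stepFn d m α = α :=
  dif_neg h

lemma stepFn_eq_rw1 {α : Fin n →₀ ℕ} (h : (activeSet d α).Nonempty) :
    stepFn d m α = rw1 d m ((activeSet d α).min' h) α :=
  dif_pos h

lemma isLeastLabel_iff {α : Fin n →₀ ℕ} (h : (activeSet d α).Nonempty) (k : Fin n) :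
    IsLeastLabel d α k ↔ k = (activeSet d α).min' h := by
  constructor
  · rintro ⟨h1, h2⟩
    have hk : k ∈ activeSet d α := mem_activeSet d |>.mpr h1
    have hle : (activeSet d α).min' h ≤ k := Finset.min'_le _ _ hk
    rcases lt_or_eq_of_le hle with hlt | heq
    · have := h2 _ hlt
      have := mem_activeSet d |>.mp ((activeSet d α).min'_mem h)
      omega
    · exact heq.symm
  · rintro rfl
    refine ⟨mem_activeSet d |>.mp ((activeSet d α).min'_mem h), fun l hl => ?_⟩
    by_contra hc
    have : l ∈ activeSet d α := mem_activeSet d |>.mpr (by omega)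
    exact absurd (Finset.min'_le _ _ this) (not_le.mpr hl)

lemma sink_iterate {α : Fin n →₀ ℕ} (h : ¬ (activeSet d α).Nonempty) (t : ℕ) :
    (stepFn d m)^[t] α = α :=
  Function.iterate_fixed (stepFn_sink d m h) t

lemma hitTime_delta : hitTime d m (deltaExp d) (deltaExp d) = 0 :=
  Nat.sInf_eq_zero.mpr (Or.inl rfl)

lemma rPath_delta (k : Fin n) : rPath d m (deltaExp d) (deltaExp d) k = 0 := by
  simp [rPath, hitTime_delta]

lemma reaches_hitTime {δ α : Fin n →₀ ℕ} (h : Reaches d m δ α) :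
    (stepFn d m)^[hitTime d m δ α] α = δ :=
  Nat.sInf_mem h

lemma hitTime_succ {δ α : Fin n →₀ ℕ} (h : Reaches d m δ α) (hne : α ≠ δ) :
    Reaches d m δ (stepFn d m α) ∧ hitTime d m δ α = hitTime d m δ (stepFn d m α) + 1 := by
  have hT := reaches_hitTime d m h
  have hT0 : hitTime d m δ α ≠ 0 := by
    intro h0
    rw [h0] at hT
    exact hne hT
  have h1 : (stepFn d m)^[hitTime d m δ α - 1] (stepFn d m α) = δ := by
    rw [← Function.iterate_succ_apply]
    have : (hitTime d m δ α - 1).succ = hitTime d m δ α := by omega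
    rwa [this]
  have hr : Reaches d m δ (stepFn d m α) := ⟨_, h1⟩
  have h2 : hitTime d m δ (stepFn d m α) ≤ hitTime d m δ α - 1 := Nat.sInf_le h1
  have h3 : hitTime d m δ α ≤ hitTime d m δ (stepFn d m α) + 1 := by
    apply Nat.sInf_le
    show (stepFn d m)^[_ + 1] α = δ
    rw [Function.iterate_succ_apply]
    exact reaches_hitTime d m hr
  exact ⟨hr, by omega⟩


lemma reaches_not_sink {α : Fin n →₀ ℕ} (h : Reaches d m (deltaExp d) α)
    (hne : α ≠ deltaExp d) : (activeSet d α).Nonempty := by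
  by_contra hs
  obtain ⟨t, ht⟩ := h
  rw [sink_iterate d m hs] at ht
  exact hne ht

lemma rPath_succ {α : Fin n →₀ ℕ} (h : Reaches d m (deltaExp d) α)
    (hne : α ≠ deltaExp d) (k : Fin n) :
    rPath d m (deltaExp d) α k
      = (if IsLeastLabel d α k then 1 else 0)
        + rPath d m (deltaExp d) (stepFn d m α) k := by
  classical
  obtain ⟨h1, h2⟩ := hitTime_succ d m h hne
  unfold rPath
  rw [h2]
  rw [Finset.card_filter, Finset.card_filter, Finset.sum_range_succ']
  simp only [Function.iterate_succ_apply, Function.iterate_zero_apply]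
  rw [add_comm]
  congr 1

lemma reaches_rseq (hd : ∀ i, 0 < d i) : ∀ (N : ℕ) (α : Fin n →₀ ℕ),
    hitTime d m (deltaExp d) α ≤ N → Reaches d m (deltaExp d) α →
    ∃ L, RSeq d m L α (deltaExp d) ∧ ∀ k, L.count k = rPath d m (deltaExp d) α k := by
  intro N
  induction N with
  | zero =>
    intro α hle h
    have hα : α = deltaExp d := by
      have := reaches_hitTime d m h
      rw [Nat.le_zero.mp hle] at this
      exact this
    subst hα
    exact ⟨[], RSeq.nil _, fun k => by simp [rPath_delta]⟩
  | succ N ih =>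
    intro α hle h
    by_cases hne : α = deltaExp d
    · subst hne
      exact ⟨[], RSeq.nil _, fun k => by simp [rPath_delta]⟩
    · have hact := reaches_not_sink d m h hne
      have hstep := stepFn_eq_rw1 d m hact
      obtain ⟨hr, hT⟩ := hitTime_succ d m h hne
      obtain ⟨L', hL', hcnt⟩ := ih (stepFn d m α) (by omega) hr
      refine ⟨(activeSet d α).min' hact :: L', ?_, fun k => ?_⟩
      · exact RSeq.cons (mem_activeSet d |>.mp ((activeSet d α).min'_mem hact)) (hstep ▸ hL')
      · rw [count_cons'', hcnt k, rPath_succ d m h hne k]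
        have hiff := isLeastLabel_iff d hact k
        have : (if IsLeastLabel d α k then (1:ℕ) else 0)
            = (if k = (activeSet d α).min' hact then 1 else 0) := by
          by_cases hc : IsLeastLabel d α k
          · rw [if_pos hc, if_pos (hiff.mp hc)]
          · rw [if_neg hc, if_neg (fun hx => hc (hiff.mpr hx))]
        omega

lemma rseq_reaches (hd : ∀ i, 0 < d i) : ∀ (N : ℕ) (L : List (Fin n)) (α : Fin n →₀ ℕ),
    L.length ≤ N → RSeq d m L α (deltaExp d) →
    Reaches d m (deltaExp d) α ∧ ∀ k, rPath d m (deltaExp d) α k = L.count k := by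
  intro N
  induction N with
  | zero =>
    intro L α hlen hL
    cases L with
    | nil =>
      cases hL
      exact ⟨⟨0, rfl⟩, fun k => by simp [rPath_delta]⟩
    | cons x xs => simp at hlen
  | succ N ih =>
    intro L α hlen hL
    by_cases hne : α = deltaExp d
    · subst hne
      cases hL with
      | nil => exact ⟨⟨0, rfl⟩, fun k => by simp [rPath_delta]⟩
      | cons hj h2 => exact absurd hj (delta_not_active d hd _)
    · cases hL with
      | nil => exact absurd rfl hne
      | cons hj h2 =>
        have hact : (activeSet d α).Nonempty := ⟨_, mem_activeSet d |>.mpr hj⟩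
        have hi0 : d ((activeSet d α).min' hact) ≤ α ((activeSet d α).min' hact) :=
          mem_activeSet d |>.mp ((activeSet d α).min'_mem hact)
        obtain ⟨M, hM, hMlen, hMcnt⟩ := rseq_shift d m hd (RSeq.cons hj h2) hi0
        have hstep := stepFn_eq_rw1 d m hact
        obtain ⟨hr', hcnt'⟩ := ih M _ (by simp at hMlen hlen ⊢; omega) hM
        have hrα : Reaches d m (deltaExp d) α := by
          obtain ⟨t, ht⟩ := hr'
          exact ⟨t + 1, by rw [Function.iterate_succ_apply, hstep]; exact ht⟩
        refine ⟨hrα, fun k => ?_⟩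
        rw [rPath_succ d m hrα hne k, hstep, hcnt' k]
        have hiff := isLeastLabel_iff d hact k
        have h5 : (if IsLeastLabel d α k then (1:ℕ) else 0)
            = (if k = (activeSet d α).min' hact then 1 else 0) := by
          by_cases hc : IsLeastLabel d α k
          · rw [if_pos hc, if_pos (hiff.mp hc)]
          · rw [if_neg hc, if_neg (fun hx => hc (hiff.mpr hx))]
        have := hMcnt k
        omega

lemma rw1_single_sum (hmdeg : ∀ i, (∑ j, m i j) = d i) {i : Fin n} {α : Fin n →₀ ℕ}
    (h : d i ≤ α i) : ∑ k, rw1 d m i α k = ∑ k, α k := by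
  have h1 : rw1 d m i α + Finsupp.single i (d i) = α + m i := by
    ext k
    simp only [rw1_apply, Finsupp.add_apply, Finsupp.single_apply]
    split_ifs with h'
    · subst h'; omega
    · omega
  have h2 : ∑ k, (rw1 d m i α + Finsupp.single i (d i)) k = ∑ k, (α + m i) k := by rw [h1]
  simp only [Finsupp.add_apply, Finset.sum_add_distrib] at h2
  have h3 : ∑ k, Finsupp.single i (d i) k = d i := by
    simp [Finsupp.single_apply]
  rw [h3, hmdeg i] at h2
  omega

lemma stepFn_sum (hmdeg : ∀ i, (∑ j, m i j) = d i) (α : Fin n →₀ ℕ) :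
    ∑ k, stepFn d m α k = ∑ k, α k := by
  by_cases h : (activeSet d α).Nonempty
  · rw [stepFn_eq_rw1 d m h]
    exact rw1_single_sum d m hmdeg (mem_activeSet d |>.mp ((activeSet d α).min'_mem h))
  · rw [stepFn_sink d m h]

lemma iterate_sum (hmdeg : ∀ i, (∑ j, m i j) = d i) (t : ℕ) (α : Fin n →₀ ℕ) :
    ∑ k, ((stepFn d m)^[t] α) k = ∑ k, α k := by
  induction t generalizing α with
  | zero => rfl
  | succ t ihh =>
    rw [Function.iterate_succ_apply]
    rw [ihh (stepFn d m α), stepFn_sum d m hmdeg]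

lemma reaches_sum (hmdeg : ∀ i, (∑ j, m i j) = d i) {α : Fin n →₀ ℕ}
    (h : Reaches d m (deltaExp d) α) : ∑ k, α k = ∑ k, deltaExp d k := by
  obtain ⟨t, ht⟩ := h
  rw [← ht, iterate_sum d m hmdeg]

lemma reaches_finite (hmdeg : ∀ i, (∑ j, m i j) = d i) :
    {α : Fin n →₀ ℕ | Reaches d m (deltaExp d) α}.Finite := by
  apply Set.Finite.subset
    (Set.finite_Iic (Finsupp.equivFunOnFinite.symm (fun _ => ∑ k, deltaExp d k)))
  intro α hα
  have hsum := reaches_sum d m hmdeg hα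
  rw [Set.mem_Iic, Finsupp.le_def]
  intro k
  have : α k ≤ ∑ j, α j := Finset.single_le_sum (fun _ _ => Nat.zero_le _) (Finset.mem_univ k)
  calc α k ≤ ∑ j, α j := this
    _ = ∑ k, deltaExp d k := hsum
    _ = _ := rfl

lemma rPath_le_sMax (hmdeg : ∀ i, (∑ j, m i j) = d i) {α : Fin n →₀ ℕ}
    (h : Reaches d m (deltaExp d) α) (i : Fin n) :
    rPath d m (deltaExp d) α i ≤ sMax d m (deltaExp d) i :=
  le_csSup (((reaches_finite d m hmdeg).image _).bddAbove) ⟨α, h, rfl⟩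


lemma sub_single_add {j : Fin n} {γ : Fin n →₀ ℕ} (h : d j ≤ γ j) (β : Fin n →₀ ℕ) :
    β + (γ - Finsupp.single j (d j)) + Finsupp.single j (d j) = β + γ := by
  ext k
  simp only [Finsupp.add_apply, Finsupp.tsub_apply, Finsupp.single_apply]
  split_ifs with hc
  · subst hc; omega
  · omega

lemma chase (hd : ∀ i, 0 < d i) : ∀ (L : List (Fin n)) (x y : Fin n →₀ ℕ),
    RSeq d m L x y → ∀ M, RSeq d m M x (deltaExp d) →
    ∃ M', RSeq d m M' y (deltaExp d) := by
  intro L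
  induction L with
  | nil =>
    intro x y hxy M hM
    cases hxy
    exact ⟨M, hM⟩
  | cons j L' ih =>
    intro x y hxy M hM
    cases hxy with
    | cons hj h2 =>
      obtain ⟨M2, hM2, -, -⟩ := rseq_shift d m hd hM hj
      exact ih _ _ h2 M2 hM2

lemma lift_path (β : Fin n →₀ ℕ) : ∀ (t : ℕ) (γ : Fin n →₀ ℕ),
    (∀ s, s < t → (activeSet d ((stepFn d m)^[s] γ)).Nonempty) →
    ∃ L : List (Fin n), L.length = t ∧ RSeq d m L (β + γ) (β + (stepFn d m)^[t] γ) := by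
  intro t
  induction t with
  | zero => exact fun γ _ => ⟨[], rfl, RSeq.nil _⟩
  | succ t ih =>
    intro γ hns
    have hact : (activeSet d γ).Nonempty := hns 0 (by omega)
    have hjγ : d ((activeSet d γ).min' hact) ≤ γ ((activeSet d γ).min' hact) :=
      mem_activeSet d |>.mp (Finset.min'_mem _ hact)
    obtain ⟨L, hlen, hL⟩ := ih (stepFn d m γ)
      (fun s hs => by
        have := hns (s + 1) (by omega)
        rwa [Function.iterate_succ_apply] at this)
    refine ⟨(activeSet d γ).min' hact :: L, by simp [hlen], ?_⟩
    refine RSeq.cons ?_ ?_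
    · show d _ ≤ (β + γ) _
      rw [Finsupp.add_apply]
      omega
    · rw [rw1_add d m β hjγ, ← stepFn_eq_rw1 d m hact, Function.iterate_succ_apply]
      exact hL

lemma never_sink_not_reaches (hd : ∀ i, 0 < d i) (hmdeg : ∀ i, (∑ j, m i j) = d i)
    (γ : Fin n →₀ ℕ)
    (hns : ∀ t, (activeSet d ((stepFn d m)^[t] γ)).Nonempty) (β : Fin n →₀ ℕ) :
    ¬ Reaches d m (deltaExp d) (β + γ) := by
  intro hr
  have hrange : (Set.range fun t => (stepFn d m)^[t] γ).Finite := by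
    apply Set.Finite.subset
      (Set.finite_Iic (Finsupp.equivFunOnFinite.symm (fun _ => ∑ k, γ k)))
    rintro α ⟨t, rfl⟩
    rw [Set.mem_Iic, Finsupp.le_def]
    intro k
    have h1 : ((stepFn d m)^[t] γ) k ≤ ∑ j, ((stepFn d m)^[t] γ) j :=
      Finset.single_le_sum (fun _ _ => Nat.zero_le _) (Finset.mem_univ k)
    rw [iterate_sum d m hmdeg] at h1
    exact h1
  have hninj : ¬ Function.Injective (fun t => (stepFn d m)^[t] γ) :=
    fun hinj => Set.infinite_range_of_injective hinj hrange
  rw [Function.not_injective_iff] at hninj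
  obtain ⟨t1, t2, heq2, hne⟩ := hninj
  obtain ⟨t, t', htlt, heq⟩ : ∃ t t', t < t' ∧
      (stepFn d m)^[t] γ = (stepFn d m)^[t'] γ := by
    rcases Nat.lt_or_ge t1 t2 with h | h
    · exact ⟨t1, t2, h, heq2⟩
    · exact ⟨t2, t1, by omega, heq2.symm⟩
  obtain ⟨L1, -, hL1⟩ := lift_path d m β t γ (fun s _ => hns s)
  obtain ⟨M, hM, -⟩ := reaches_rseq d m hd _ _ le_rfl hr
  obtain ⟨M', hM'⟩ := chase d m hd L1 _ _ hL1 M hM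
  obtain ⟨C, hClen, hC⟩ := lift_path d m β (t' - t) ((stepFn d m)^[t] γ)
    (fun s _ => by rw [← Function.iterate_add_apply]; exact hns (s + t))
  rw [← Function.iterate_add_apply, (show t' - t + t = t' by omega), ← heq] at hC
  refine no_cycle d m hd M'.length _ M' le_rfl hM' C ?_ hC
  intro h
  rw [h] at hClen
  simp at hClen
  omega

end Graph


section Key
variable {K : Type*} [Field K] {n : ℕ} (d : Fin n → ℕ) (m : Fin n → (Fin n →₀ ℕ))
  (a b : Fin n → K)

lemma key_identity (hd : ∀ i, 0 < d i) (hmdeg : ∀ i, (∑ j, m i j) = d i)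
    (F : MvPolynomial (Fin n) K)
    (hF : ∀ α : Fin n →₀ ℕ, F.coeff α =
      if Reaches d m (deltaExp d) α then
        ∏ i, a i ^ (sMax d m (deltaExp d) i - rPath d m (deltaExp d) α i)
          * b i ^ (rPath d m (deltaExp d) α i)
      else 0)
    (i : Fin n) (β : Fin n →₀ ℕ) :
    a i * F.coeff (β + Finsupp.single i (d i)) = b i * F.coeff (β + m i) := by
  have hui : d i ≤ (β + Finsupp.single i (d i)) i := by
    simp [Finsupp.add_apply, Finsupp.single_eq_same]
  have hv : rw1 d m i (β + Finsupp.single i (d i)) = β + m i := by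
    ext k
    simp only [rw1_apply, Finsupp.add_apply, Finsupp.single_apply]
    split_ifs with h <;> omega
  by_cases hru : Reaches d m (deltaExp d) (β + Finsupp.single i (d i))
  · obtain ⟨L, hL, hcnt⟩ := reaches_rseq d m hd _ _ le_rfl hru
    obtain ⟨M, hM, hMlen, hMcnt⟩ := rseq_shift d m hd hL hui
    obtain ⟨hrv, hvcnt⟩ := rseq_reaches d m hd M.length M _ le_rfl hM
    rw [hv] at hrv hvcnt
    have hru' : ∀ k, rPath d m (deltaExp d) (β + Finsupp.single i (d i)) k
        = rPath d m (deltaExp d) (β + m i) k + (if k = i then 1 else 0) := by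
      intro k
      rw [hvcnt k, ← hcnt k, ← hMcnt k]
    have hsle : rPath d m (deltaExp d) (β + Finsupp.single i (d i)) i
        ≤ sMax d m (deltaExp d) i := rPath_le_sMax d m hmdeg hru i
    rw [hF (β + Finsupp.single i (d i)), hF (β + m i), if_pos hru, if_pos hrv]
    rw [← Finset.mul_prod_erase Finset.univ _ (Finset.mem_univ i),
      ← Finset.mul_prod_erase Finset.univ
        (fun k => a k ^ (sMax d m (deltaExp d) k - rPath d m (deltaExp d) (β + m i) k)
          * b k ^ (rPath d m (deltaExp d) (β + m i) k)) (Finset.mem_univ i)]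
    have hPeq : ∏ k ∈ Finset.univ.erase i,
        (a k ^ (sMax d m (deltaExp d) k
            - rPath d m (deltaExp d) (β + Finsupp.single i (d i)) k)
          * b k ^ (rPath d m (deltaExp d) (β + Finsupp.single i (d i)) k))
        = ∏ k ∈ Finset.univ.erase i,
        (a k ^ (sMax d m (deltaExp d) k - rPath d m (deltaExp d) (β + m i) k)
          * b k ^ (rPath d m (deltaExp d) (β + m i) k)) := by
      refine Finset.prod_congr rfl fun k hk => ?_
      have hki : k ≠ i := Finset.ne_of_mem_erase hk
      rw [hru' k, if_neg hki, add_zero]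
    rw [hPeq]
    have hri := hru' i
    rw [if_pos rfl] at hri
    set s0 := sMax d m (deltaExp d) i
    set r0 := rPath d m (deltaExp d) (β + m i) i
    rw [hri] at hsle ⊢
    have hs0 : s0 - r0 = (s0 - (r0 + 1)) + 1 := by omega
    rw [hs0, pow_succ, pow_succ]
    ring
  · have hrv : ¬ Reaches d m (deltaExp d) (β + m i) := by
      intro hr
      obtain ⟨L, hL, -⟩ := reaches_rseq d m hd _ _ le_rfl hr
      have hseq : RSeq d m (i :: L) (β + Finsupp.single i (d i)) (deltaExp d) :=
        RSeq.cons hui (by rw [hv]; exact hL)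
      exact hru ((rseq_reaches d m hd (i :: L).length _ _ le_rfl hseq).1)
    rw [hF (β + Finsupp.single i (d i)), hF (β + m i), if_neg hru, if_neg hrv,
      mul_zero, mul_zero]


lemma key_step (hd : ∀ i, 0 < d i) (hmdeg : ∀ i, (∑ j, m i j) = d i) (ha : ∀ i, a i ≠ 0)
    (F : MvPolynomial (Fin n) K)
    (hF : ∀ α : Fin n →₀ ℕ, F.coeff α =
      if Reaches d m (deltaExp d) α then
        ∏ i, a i ^ (sMax d m (deltaExp d) i - rPath d m (deltaExp d) α i)
          * b i ^ (rPath d m (deltaExp d) α i)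
      else 0)
    (γ : Fin n →₀ ℕ) :
    ∃ c : K, ∀ β, F.coeff (β + γ) = c * F.coeff (β + stepFn d m γ) := by
  by_cases hact : (activeSet d γ).Nonempty
  · have hjγ : d ((activeSet d γ).min' hact) ≤ γ ((activeSet d γ).min' hact) :=
      mem_activeSet d |>.mp (Finset.min'_mem _ hact)
    refine ⟨(a ((activeSet d γ).min' hact))⁻¹ * b ((activeSet d γ).min' hact), fun β => ?_⟩
    have hkey := key_identity d m a b hd hmdeg F hF ((activeSet d γ).min' hact)
      (β + (γ - Finsupp.single ((activeSet d γ).min' hact) (d ((activeSet d γ).min' hact))))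
    rw [sub_single_add d hjγ β, add_assoc,
      (show γ - Finsupp.single ((activeSet d γ).min' hact) (d ((activeSet d γ).min' hact))
          + m ((activeSet d γ).min' hact) = rw1 d m ((activeSet d γ).min' hact) γ from rfl),
      ← stepFn_eq_rw1 d m hact] at hkey
    calc F.coeff (β + γ)
        = (a ((activeSet d γ).min' hact))⁻¹ * (a ((activeSet d γ).min' hact)
            * F.coeff (β + γ)) := by
          rw [← mul_assoc, inv_mul_cancel₀ (ha _), one_mul]
      _ = (a ((activeSet d γ).min' hact))⁻¹ * (b ((activeSet d γ).min' hact)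
            * F.coeff (β + stepFn d m γ)) := by rw [hkey]
      _ = _ := by ring
  · exact ⟨1, fun β => by rw [stepFn_sink d m hact, one_mul]⟩

lemma key_iterate (hd : ∀ i, 0 < d i) (hmdeg : ∀ i, (∑ j, m i j) = d i) (ha : ∀ i, a i ≠ 0)
    (F : MvPolynomial (Fin n) K)
    (hF : ∀ α : Fin n →₀ ℕ, F.coeff α =
      if Reaches d m (deltaExp d) α then
        ∏ i, a i ^ (sMax d m (deltaExp d) i - rPath d m (deltaExp d) α i)
          * b i ^ (rPath d m (deltaExp d) α i)
      else 0)
    (t : ℕ) (γ : Fin n →₀ ℕ) :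
    ∃ c : K, ∀ β, F.coeff (β + γ) = c * F.coeff (β + (stepFn d m)^[t] γ) := by
  induction t generalizing γ with
  | zero => exact ⟨1, fun β => by simp⟩
  | succ t ih =>
    obtain ⟨c1, h1⟩ := key_step d m a b hd hmdeg ha F hF γ
    obtain ⟨c2, h2⟩ := ih (stepFn d m γ)
    exact ⟨c1 * c2, fun β => by
      rw [Function.iterate_succ_apply, h1 β, h2 β, mul_assoc]⟩

end Key


section Contract
variable {K : Type*} [Field K] {n : ℕ}

lemma contract_coeff (g F : MvPolynomial (Fin n) K) (β : Fin n →₀ ℕ) :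
    (contract g F).coeff β = ∑ γ ∈ g.support, g.coeff γ * F.coeff (β + γ) := by
  unfold contract
  rw [MvPolynomial.coeff_sum]
  refine Finset.sum_congr rfl fun γ _ => ?_
  rw [MvPolynomial.coeff_sum]
  have hterm : ∀ β' ∈ F.support,
      MvPolynomial.coeff β (if γ ≤ β' then monomial (β' - γ) (g.coeff γ * F.coeff β') else 0)
        = if β' = β + γ then g.coeff γ * F.coeff β' else 0 := by
    intro β' _
    split_ifs with h1 h2 h3
    · rw [coeff_monomial, if_pos (by subst h2; rw [add_tsub_cancel_right])]
    · rw [coeff_monomial, if_neg (fun he => h2 ((tsub_eq_iff_eq_add_of_le h1).mp he))]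
    · exact absurd (h3 ▸ le_add_self) h1
    · rw [MvPolynomial.coeff_zero]
  rw [Finset.sum_congr rfl hterm, Finset.sum_ite_eq' F.support (β + γ)]
  split_ifs with h
  · rfl
  · rw [MvPolynomial.notMem_support_iff.mp h, mul_zero]

lemma contract_coeff_subset {g : MvPolynomial (Fin n) K} {s : Finset (Fin n →₀ ℕ)}
    (hs : g.support ⊆ s) (F : MvPolynomial (Fin n) K) (β : Fin n →₀ ℕ) :
    (contract g F).coeff β = ∑ γ ∈ s, g.coeff γ * F.coeff (β + γ) := by
  rw [contract_coeff]
  exact Finset.sum_subset hs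
    (fun x _ hx => by rw [MvPolynomial.notMem_support_iff.mp hx, zero_mul])

lemma contract_add_left (g₁ g₂ F : MvPolynomial (Fin n) K) :
    contract (g₁ + g₂) F = contract g₁ F + contract g₂ F := by
  apply MvPolynomial.ext; intro β
  rw [MvPolynomial.coeff_add]
  rw [contract_coeff_subset (s := g₁.support ∪ g₂.support ∪ (g₁ + g₂).support)
    (Finset.subset_union_right) F β]
  rw [contract_coeff_subset (s := g₁.support ∪ g₂.support ∪ (g₁ + g₂).support)
    (fun x hx => Finset.mem_union_left _ (Finset.mem_union_left _ hx)) F β]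
  rw [contract_coeff_subset (s := g₁.support ∪ g₂.support ∪ (g₁ + g₂).support)
    (fun x hx => Finset.mem_union_left _ (Finset.mem_union_right _ hx)) F β]
  rw [← Finset.sum_add_distrib]
  exact Finset.sum_congr rfl fun γ _ => by rw [MvPolynomial.coeff_add]; ring

lemma contract_smul_left (c : K) (g F : MvPolynomial (Fin n) K) :
    contract (c • g) F = c • contract g F := by
  apply MvPolynomial.ext; intro β
  rw [MvPolynomial.coeff_smul]
  rw [contract_coeff_subset (MvPolynomial.support_smul) F β, contract_coeff,
    smul_eq_mul, Finset.mul_sum]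
  exact Finset.sum_congr rfl fun γ _ => by rw [MvPolynomial.coeff_smul, smul_eq_mul]; ring

lemma contract_sub_left (g₁ g₂ F : MvPolynomial (Fin n) K) :
    contract (g₁ - g₂) F = contract g₁ F - contract g₂ F := by
  rw [sub_eq_add_neg, ← neg_one_smul K g₂, contract_add_left, contract_smul_left,
    neg_one_smul, ← sub_eq_add_neg]

lemma contract_zero_left (F : MvPolynomial (Fin n) K) : contract 0 F = 0 := by
  simp [contract]

lemma contract_zero_right (g : MvPolynomial (Fin n) K) : contract g 0 = 0 := by
  simp [contract]

lemma contract_monomial_coeff (u : Fin n →₀ ℕ) (c : K) (F : MvPolynomial (Fin n) K)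
    (β : Fin n →₀ ℕ) :
    (contract (monomial u c) F).coeff β = c * F.coeff (β + u) := by
  rw [contract_coeff_subset MvPolynomial.support_monomial_subset F β, Finset.sum_singleton,
    coeff_monomial, if_pos rfl]

lemma contract_mul (p q F : MvPolynomial (Fin n) K) :
    contract (p * q) F = contract p (contract q F) := by
  induction p using MvPolynomial.induction_on' with
  | monomial u c =>
    apply MvPolynomial.ext; intro β
    have hsupp : (monomial u c * q).support ⊆ q.support.image (u + ·) := by
      intro γ hγ
      rw [MvPolynomial.mem_support_iff, MvPolynomial.coeff_monomial_mul'] at hγ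
      by_cases hle : u ≤ γ
      · rw [if_pos hle] at hγ
        exact Finset.mem_image.mpr ⟨γ - u,
          MvPolynomial.mem_support_iff.mpr (right_ne_zero_of_mul hγ),
          add_tsub_cancel_of_le hle⟩
      · rw [if_neg hle] at hγ
        exact absurd rfl hγ
    rw [contract_coeff_subset hsupp F β,
      Finset.sum_image (by intro x _ y _ h; exact add_left_cancel h),
      contract_monomial_coeff, contract_coeff, Finset.mul_sum]
    refine Finset.sum_congr rfl fun v hv => ?_
    rw [MvPolynomial.coeff_monomial_mul', if_pos (le_add_right le_rfl), add_tsub_cancel_left,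
      ← add_assoc]
    ring
  | add p₁ p₂ ih₁ ih₂ =>
    rw [add_mul, contract_add_left, ih₁, ih₂, ← contract_add_left]

end Contract



open Classical in
/-- for arbitrary scalars with `a i ≠ 0` (no regularity assumption), letting
`F = F_B` be the polynomial of Theorem `stmt4`, the ideal `(f 1, …, f n)` is contained in
`Ann(F)` (every element of the ideal contracts `F` to `0`), and the monomials `x^α` with
`α i < d i` for all `i` span `R/Ann(F)`: every `g ∈ R` is congruent modulo `Ann(F)`
(i.e. up to an element contracting `F` to zero) to a `K`-linear combination of such
monomials. -/
theorem stmt6 {K : Type*} [Field K] {n : ℕ} (hn : 0 < n)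
    (d : Fin n → ℕ) (hd : ∀ i, 0 < d i)
    (a b : Fin n → K) (ha : ∀ i, a i ≠ 0)
    (m : Fin n → (Fin n →₀ ℕ))
    (hmdeg : ∀ i, (∑ j, m i j) = d i)
    (hmne : ∀ i, m i ≠ Finsupp.single i (d i))
    (f : Fin n → MvPolynomial (Fin n) K)
    (hf : ∀ i, f i = monomial (Finsupp.single i (d i)) (a i) - monomial (m i) (b i))
    (F : MvPolynomial (Fin n) K)
    (hF : ∀ α : Fin n →₀ ℕ, F.coeff α =
      if Reaches d m (deltaExp d) α then
        ∏ i, a i ^ (sMax d m (deltaExp d) i - rPath d m (deltaExp d) α i)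
          * b i ^ (rPath d m (deltaExp d) α i)
      else 0) :
    (∀ g ∈ Ideal.span (Set.range f), contract g F = 0) ∧
    (∀ g : MvPolynomial (Fin n) K,
      ∃ h ∈ Submodule.span K
        {p : MvPolynomial (Fin n) K |
          ∃ α : Fin n →₀ ℕ, (∀ i, α i < d i) ∧ p = monomial α (1 : K)},
        contract (g - h) F = 0) := by
  constructor
  · intro g hg
    have hfi : ∀ i, contract (f i) F = 0 := by
      intro i
      apply MvPolynomial.ext; intro β
      have hsupp : (f i).support ⊆ {Finsupp.single i (d i), m i} := by
        rw [hf i]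
        intro x hx
        have hx' := MvPolynomial.support_sub _ _ _ hx
        rcases Finset.mem_union.mp hx' with h | h
        · have := MvPolynomial.support_monomial_subset h
          simp only [Finset.mem_singleton] at this
          simp [this]
        · have := MvPolynomial.support_monomial_subset h
          simp only [Finset.mem_singleton] at this
          simp [this]
      rw [contract_coeff_subset hsupp F β, MvPolynomial.coeff_zero]
      rw [Finset.sum_pair (Ne.symm (hmne i))]
      have hc1 : (f i).coeff (Finsupp.single i (d i)) = a i := by
        rw [hf i]
        simp [MvPolynomial.coeff_sub, coeff_monomial, hmne i]
      have hc2 : (f i).coeff (m i) = - b i := by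
        rw [hf i]
        simp [MvPolynomial.coeff_sub, coeff_monomial, Ne.symm (hmne i)]
      rw [hc1, hc2]
      have hk := key_identity d m a b hd hmdeg F hF i β
      linear_combination hk
    refine Submodule.span_induction ?_ ?_ ?_ ?_ hg
    · rintro x ⟨i, rfl⟩
      exact hfi i
    · exact contract_zero_left F
    · intro x y hx hy ihx ihy
      rw [contract_add_left, ihx, ihy, add_zero]
    · intro r x hx ihx
      rw [smul_eq_mul, contract_mul, ihx, contract_zero_right]
  · intro g
    induction g using MvPolynomial.induction_on' with
    | monomial u c =>
      by_cases hsink : ∃ t, ¬ (activeSet d ((stepFn d m)^[t] u)).Nonempty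
      · obtain ⟨t, ht⟩ := hsink
        obtain ⟨cc, hcc⟩ := key_iterate d m a b hd hmdeg ha F hF t u
        refine ⟨(c * cc) • monomial ((stepFn d m)^[t] u) (1 : K), ?_, ?_⟩
        · apply Submodule.smul_mem
          apply Submodule.subset_span
          refine ⟨(stepFn d m)^[t] u, fun k => ?_, rfl⟩
          have hk : ¬ d k ≤ ((stepFn d m)^[t] u) k :=
            fun hk => ht ⟨k, mem_activeSet d |>.mpr hk⟩
          omega
        · apply MvPolynomial.ext; intro β
          rw [contract_sub_left, MvPolynomial.coeff_sub, contract_smul_left,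
            MvPolynomial.coeff_smul, contract_monomial_coeff, contract_monomial_coeff,
            MvPolynomial.coeff_zero, hcc β, smul_eq_mul]
          ring
      · push_neg at hsink
        refine ⟨0, Submodule.zero_mem _, ?_⟩
        apply MvPolynomial.ext; intro β
        rw [sub_zero, contract_monomial_coeff, MvPolynomial.coeff_zero,
          hF (β + u), if_neg (never_sink_not_reaches d m hd hmdeg u hsink β), mul_zero]
    | add p q ihp ihq =>
      obtain ⟨h1, hm1, hz1⟩ := ihp
      obtain ⟨h2, hm2, hz2⟩ := ihq
      refine ⟨h1 + h2, Submodule.add_mem _ hm1 hm2, ?_⟩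
      have hre : p + q - (h1 + h2) = (p - h1) + (q - h2) := by ring
      rw [hre, contract_add_left, hz1, hz2, add_zero]
end

section
/- Fix an index i ∈ {1,…,n} and assume that no m_k is a pure power of x_i (that is, m_k ≠ x_i^{d_k} for all k = 1,…,n). If a_i = 0, then f_1,…,f_n is not a regular sequence on R (indeed, all of f_1,…,f_n vanish at the point e_i ∈ K^n having 1 in position i and 0 elsewhere, so the f_k have a nontrivial common zero). -/
open MvPolynomial

namespace Stmt11Aux
variable {K : Type*} [Field K] {n : ℕ}

lemma degree_eq_sum_univ (u : Fin n →₀ ℕ) : u.degree = ∑ j, u j :=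
  Finset.sum_subset (Finset.subset_univ _) (fun _ _ hx => Finsupp.notMem_support_iff.mp hx)

lemma degree_single (k : Fin n) (c : ℕ) : (Finsupp.single k c).degree = c := by
  rw [degree_eq_sum_univ]
  rw [Finset.sum_eq_single k (fun b _ hb => Finsupp.single_eq_of_ne' (Ne.symm hb)) (by simp)]
  simp

lemma hc_mul_homog {e : ℕ} {g : MvPolynomial (Fin n) K} (hg : g.IsHomogeneous e)
    (r : MvPolynomial (Fin n) K) (j : ℕ) :
    homogeneousComponent (e + j) (g * r) = g * homogeneousComponent j r := by
  induction r using MvPolynomial.induction_on' with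
  | monomial u c =>
    have hm : (monomial u c).IsHomogeneous u.degree := isHomogeneous_monomial c rfl
    rw [homogeneousComponent_of_mem ((mem_homogeneousSubmodule _ _).mpr (hg.mul hm)),
      homogeneousComponent_of_mem ((mem_homogeneousSubmodule _ _).mpr hm)]
    by_cases h : u.degree = j
    · simp [h]
    · rw [if_neg (by omega), if_neg (fun hh => h hh.symm), mul_zero]
  | add p q hp hq => rw [mul_add, map_add, hp, hq, map_add, mul_add]

lemma hc_mul_homog_lt {e : ℕ} {g : MvPolynomial (Fin n) K} (hg : g.IsHomogeneous e)
    (r : MvPolynomial (Fin n) K) {j : ℕ} (hj : j < e) :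
    homogeneousComponent j (g * r) = 0 := by
  induction r using MvPolynomial.induction_on' with
  | monomial u c =>
    have hm : (monomial u c).IsHomogeneous u.degree := isHomogeneous_monomial c rfl
    rw [homogeneousComponent_of_mem ((mem_homogeneousSubmodule _ _).mpr (hg.mul hm)),
      if_neg (by omega)]
  | add p q hp hq => rw [mul_add, map_add, hp, hq, add_zero]

lemma hc_mem_span {S : Set (MvPolynomial (Fin n) K)} (hS : ∀ s ∈ S, ∃ e, s.IsHomogeneous e)
    {p : MvPolynomial (Fin n) K} (hp : p ∈ Ideal.span S) (j : ℕ) :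
    homogeneousComponent j p ∈ Ideal.span S := by
  induction hp using Submodule.span_induction generalizing j with
  | mem s hs =>
    obtain ⟨e, he⟩ := hS s hs
    rw [homogeneousComponent_of_mem ((mem_homogeneousSubmodule _ _).mpr he)]
    split
    · exact Ideal.subset_span hs
    · exact (Ideal.span S).zero_mem
  | zero => simp
  | add p q _ _ hp hq => rw [map_add]; exact (Ideal.span S).add_mem (hp j) (hq j)
  | smul r q _ hq =>
    rw [smul_eq_mul]
    have hr : r * q = ∑ t ∈ Finset.range (r.totalDegree + 1), homogeneousComponent t r * q := by
      conv_lhs => rw [← sum_homogeneousComponent r]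
      rw [Finset.sum_mul]
    rw [hr, map_sum]
    refine Submodule.sum_mem _ fun t _ => ?_
    by_cases ht : t ≤ j
    · have : t + (j - t) = j := by omega
      rw [← this, hc_mul_homog (homogeneousComponent_isHomogeneous t r)]
      exact Ideal.mul_mem_left _ _ (hq (j - t))
    · rw [hc_mul_homog_lt (j := j) (homogeneousComponent_isHomogeneous t r) q (by omega)]
      exact (Ideal.span S).zero_mem

instance fdV (j : ℕ) : FiniteDimensional K ↥(homogeneousSubmodule (Fin n) K j) :=
  Submodule.finiteDimensional_of_le (S₂ := restrictTotalDegree (Fin n) K j)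
    (fun p hp => by
      rw [mem_restrictTotalDegree]
      exact ((mem_homogeneousSubmodule _ _).mp hp).totalDegree_le)


noncomputable def cdim (I : Ideal (MvPolynomial (Fin n) K)) (j : ℕ) : ℕ :=
  Module.finrank K ↥(homogeneousSubmodule (Fin n) K j ⊓ I.restrictScalars K)

noncomputable def Ndim (K : Type*) [Field K] (n j : ℕ) : ℕ :=
  Module.finrank K ↥(homogeneousSubmodule (Fin n) K j)

lemma inf_sup_span_eq {I : Ideal (MvPolynomial (Fin n) K)} {g : MvPolynomial (Fin n) K} {e : ℕ}
    (hg : g.IsHomogeneous e)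
    (hI : ∀ p ∈ I, ∀ j, homogeneousComponent j p ∈ I)
    {j : ℕ} (hj : j < e) :
    homogeneousSubmodule (Fin n) K j ⊓ (I ⊔ Ideal.span {g}).restrictScalars K
      = homogeneousSubmodule (Fin n) K j ⊓ I.restrictScalars K := by
  apply le_antisymm
  · rintro x ⟨hxV, hxJ⟩
    have hxJ' : x ∈ I ⊔ Ideal.span {g} := hxJ
    obtain ⟨p, hp, q, hq, rfl⟩ := Submodule.mem_sup.mp hxJ'
    obtain ⟨a, rfl⟩ := Ideal.mem_span_singleton'.mp hq
    rw [mul_comm a g] at hxV ⊢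
    refine ⟨hxV, show p + g * a ∈ I from ?_⟩
    have hX : homogeneousComponent j (p + g * a) = p + g * a := by
      rw [homogeneousComponent_of_mem hxV, if_pos rfl]
    rw [← hX, map_add, hc_mul_homog_lt hg a hj, add_zero]
    exact hI p hp j
  · rintro x ⟨h1, h2⟩
    exact ⟨h1, show x ∈ (I ⊔ Ideal.span {g} : Ideal _) from Ideal.mem_sup_left h2⟩

lemma step_lt {I : Ideal (MvPolynomial (Fin n) K)} {g : MvPolynomial (Fin n) K} {e : ℕ}
    (hg : g.IsHomogeneous e)
    (hI : ∀ p ∈ I, ∀ j, homogeneousComponent j p ∈ I)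
    {j : ℕ} (hj : j < e) :
    cdim (I ⊔ Ideal.span {g}) j = cdim I j := by
  unfold cdim; rw [inf_sup_span_eq hg hI hj]


lemma step_main {I : Ideal (MvPolynomial (Fin n) K)} {g : MvPolynomial (Fin n) K} {e : ℕ}
    (hg : g.IsHomogeneous e) (hg0 : g ≠ 0)
    (hI : ∀ p ∈ I, ∀ j, homogeneousComponent j p ∈ I)
    (hreg : ∀ r, g * r ∈ I → r ∈ I)
    {j : ℕ} (hej : e ≤ j) :
    cdim (I ⊔ Ideal.span {g}) j + cdim I (j - e) = cdim I j + Ndim K n (j - e) := by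
  classical
  let mulg : MvPolynomial (Fin n) K →ₗ[K] MvPolynomial (Fin n) K := LinearMap.mulLeft K g
  have hinj : Function.Injective mulg := fun x y h =>
    mul_left_cancel₀ hg0 (by simpa [mulg, LinearMap.mulLeft_apply] using h)
  set A : Submodule K (MvPolynomial (Fin n) K) := homogeneousSubmodule (Fin n) K j ⊓ I.restrictScalars K with hA
  set B : Submodule K (MvPolynomial (Fin n) K) := Submodule.map mulg (homogeneousSubmodule (Fin n) K (j - e)) with hB
  set C : Submodule K (MvPolynomial (Fin n) K) := Submodule.map mulg
    (homogeneousSubmodule (Fin n) K (j - e) ⊓ I.restrictScalars K) with hC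
  have hcomp : ∀ a : MvPolynomial (Fin n) K, homogeneousComponent j (g * a) = g * homogeneousComponent (j - e) a := by
    intro a
    have h5 : e + (j - e) = j := by omega
    rw [← h5, hc_mul_homog hg, h5]
  have h1 : homogeneousSubmodule (Fin n) K j ⊓ (I ⊔ Ideal.span {g}).restrictScalars K = A ⊔ B := by
    apply le_antisymm
    · rintro x ⟨hxV, hxJ⟩
      have hxJ' : x ∈ I ⊔ Ideal.span {g} := hxJ
      obtain ⟨p, hp, q, hq, rfl⟩ := Submodule.mem_sup.mp hxJ'
      obtain ⟨a, rfl⟩ := Ideal.mem_span_singleton'.mp hq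
      rw [mul_comm a g] at hxV ⊢
      have hX : homogeneousComponent j (p + g * a) = p + g * a := by
        rw [homogeneousComponent_of_mem hxV, if_pos rfl]
      rw [map_add, hcomp] at hX
      rw [← hX]
      refine Submodule.mem_sup.mpr ⟨homogeneousComponent j p,
        ⟨(mem_homogeneousSubmodule _ _).mpr (homogeneousComponent_isHomogeneous j p),
          show homogeneousComponent j p ∈ I from hI p hp j⟩,
        g * homogeneousComponent (j - e) a,
        ⟨homogeneousComponent (j - e) a,
          (mem_homogeneousSubmodule _ _).mpr (homogeneousComponent_isHomogeneous (j - e) a), rfl⟩,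
        rfl⟩
    · rw [sup_le_iff]
      constructor
      · rintro x ⟨h1, h2⟩
        exact ⟨h1, show x ∈ (I ⊔ Ideal.span {g} : Ideal (MvPolynomial (Fin n) K)) from Ideal.mem_sup_left h2⟩
      · rintro x ⟨v, hv, rfl⟩
        refine ⟨?_, show g * v ∈ (I ⊔ Ideal.span {g} : Ideal (MvPolynomial (Fin n) K)) from
          Ideal.mem_sup_right (Ideal.mem_span_singleton.mpr ⟨v, rfl⟩)⟩
        have : (g * v).IsHomogeneous (e + (j - e)) :=
          hg.mul ((mem_homogeneousSubmodule _ _).mp hv)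
        rw [show e + (j - e) = j by omega] at this
        exact (mem_homogeneousSubmodule _ _).mpr this
  have h2 : A ⊓ B = C := by
    apply le_antisymm
    · rintro x ⟨⟨hxV, hxI⟩, v, hv, rfl⟩
      exact ⟨v, ⟨hv, show v ∈ I from hreg v hxI⟩, rfl⟩
    · rintro x ⟨v, ⟨hvV, hvI⟩, rfl⟩
      refine ⟨⟨?_, show g * v ∈ I from I.mul_mem_left g hvI⟩, v, hvV, rfl⟩
      have : (g * v).IsHomogeneous (e + (j - e)) :=
        hg.mul ((mem_homogeneousSubmodule _ _).mp hvV)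
      rw [show e + (j - e) = j by omega] at this
      exact (mem_homogeneousSubmodule _ _).mpr this
  haveI : FiniteDimensional K A := Submodule.finiteDimensional_of_le inf_le_left
  haveI : FiniteDimensional K ↥(homogeneousSubmodule (Fin n) K (j-e) ⊓ I.restrictScalars K) :=
    Submodule.finiteDimensional_of_le inf_le_left
  haveI : FiniteDimensional K B := Module.Finite.map _ _
  have h3 : Module.finrank K B = Ndim K n (j - e) :=
    ((Submodule.equivMapOfInjective mulg hinj _).symm.finrank_eq)
  have h4 : Module.finrank K C = cdim I (j - e) :=
    ((Submodule.equivMapOfInjective mulg hinj _).symm.finrank_eq)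
  have hrank := Submodule.finrank_sup_add_finrank_inf_eq A B
  have e1 : cdim (I ⊔ Ideal.span {g}) j = Module.finrank K ↥(A ⊔ B) := by
    rw [cdim, h1]
  rw [e1, show cdim I j = Module.finrank K ↥A from rfl, ← h3, ← h4, ← h2]
  exact hrank


noncomputable def HS (I : Ideal (MvPolynomial (Fin n) K)) : PowerSeries ℤ :=
  PowerSeries.mk fun j => (Ndim K n j : ℤ) - (cdim I j : ℤ)

lemma HS_sup_span {I : Ideal (MvPolynomial (Fin n) K)} {g : MvPolynomial (Fin n) K} {e : ℕ}
    (hg : g.IsHomogeneous e) (hg0 : g ≠ 0)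
    (hI : ∀ p ∈ I, ∀ j, homogeneousComponent j p ∈ I)
    (hreg : ∀ r, g * r ∈ I → r ∈ I) :
    HS (I ⊔ Ideal.span {g}) = (1 - PowerSeries.X ^ e) * HS I := by
  ext j
  rw [sub_mul, one_mul, map_sub, PowerSeries.coeff_X_pow_mul']
  simp only [HS, PowerSeries.coeff_mk]
  by_cases h : e ≤ j
  · rw [if_pos h]
    have h1 := step_main hg hg0 hI hreg h
    omega
  · rw [if_neg h, step_lt hg hI (by omega), sub_zero]

lemma HS_chain (g : Fin n → MvPolynomial (Fin n) K) (e : Fin n → ℕ)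
    (hh : ∀ k, (g k).IsHomogeneous (e k)) (h0 : ∀ k, g k ≠ 0)
    (hreg : ∀ (k : Fin n) (r : MvPolynomial (Fin n) K),
      g k * r ∈ Ideal.span (g '' {t | t.val < k.val}) →
        r ∈ Ideal.span (g '' {t | t.val < k.val})) :
    ∀ l, l ≤ n → HS (Ideal.span (g '' {t : Fin n | t.val < l}))
      = (∏ k ∈ Finset.univ.filter (fun k : Fin n => k.val < l), (1 - PowerSeries.X ^ e k))
          * HS (⊥ : Ideal (MvPolynomial (Fin n) K)) := by
  intro l
  induction l with
  | zero =>
    intro _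
    have hs : {t : Fin n | t.val < 0} = (∅ : Set (Fin n)) := by
      ext t; simp
    have hf : Finset.univ.filter (fun k : Fin n => k.val < 0) = ∅ := by
      ext t; simp
    rw [hs, hf, Set.image_empty, Ideal.span_empty, Finset.prod_empty, one_mul]
  | succ l ih =>
    intro hl
    have hln : l < n := by omega
    set kl : Fin n := ⟨l, hln⟩ with hkl
    have hset : {t : Fin n | t.val < l + 1} = insert kl {t : Fin n | t.val < l} := by
      ext t
      simp only [Set.mem_setOf_eq, Set.mem_insert_iff, Fin.ext_iff, hkl]
      omega
    have hfin : Finset.univ.filter (fun k : Fin n => k.val < l + 1)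
        = insert kl (Finset.univ.filter (fun k : Fin n => k.val < l)) := by
      ext t
      simp only [Finset.mem_filter, Finset.mem_insert, Finset.mem_univ, true_and, Fin.ext_iff, hkl]
      omega
    have hnotmem : kl ∉ Finset.univ.filter (fun k : Fin n => k.val < l) := by
      simp [hkl]
    rw [hset, Set.image_insert_eq, Ideal.span_insert, sup_comm, hfin,
      Finset.prod_insert hnotmem, mul_assoc, ← ih (by omega)]
    have hIspan : ∀ p ∈ Ideal.span (g '' {t : Fin n | t.val < l}), ∀ j,
        homogeneousComponent j p ∈ Ideal.span (g '' {t : Fin n | t.val < l}) := by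
      intro p hp j
      refine hc_mem_span ?_ hp j
      rintro s ⟨t, _, rfl⟩
      exact ⟨e t, hh t⟩
    exact HS_sup_span (hh kl) (h0 kl) hIspan (hreg kl)


lemma cdim_bot (j : ℕ) : cdim (⊥ : Ideal (MvPolynomial (Fin n) K)) j = 0 := by
  unfold cdim
  rw [show (⊥ : Ideal (MvPolynomial (Fin n) K)).restrictScalars K = ⊥ from rfl, inf_bot_eq,
    finrank_bot]

lemma Ndim_zero : Ndim K n 0 = 1 := by
  have hV : homogeneousSubmodule (Fin n) K 0 = Submodule.span K {(1 : MvPolynomial (Fin n) K)} := by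
    apply le_antisymm
    · intro p hp
      have hp' : p.IsHomogeneous 0 := (mem_homogeneousSubmodule _ _).mp hp
      have hC : p = C (coeff 0 p) := by
        ext d
        by_cases hd : d = 0
        · subst hd; simp
        · rw [hp'.coeff_eq_zero (fun h => hd ((Finsupp.degree_eq_zero_iff d).mp h)), coeff_C,
            if_neg (fun h => hd h.symm)]
      rw [hC]
      exact Submodule.mem_span_singleton.mpr ⟨coeff 0 p, by rw [smul_eq_C_mul, mul_one]⟩
    · rw [Submodule.span_le, Set.singleton_subset_iff]
      exact (mem_homogeneousSubmodule _ _).mpr (isHomogeneous_one _ _)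
  rw [Ndim, hV, finrank_span_singleton one_ne_zero]

lemma cdim_span_X_zero :
    cdim (Ideal.span (MvPolynomial.X '' (Set.univ : Set (Fin n))) : Ideal (MvPolynomial (Fin n) K))
      0 = 0 := by
  unfold cdim
  have hb : homogeneousSubmodule (Fin n) K 0 ⊓
      (Ideal.span (MvPolynomial.X '' (Set.univ : Set (Fin n)))).restrictScalars K = ⊥ := by
    rw [eq_bot_iff]
    rintro x ⟨hxV, hxI⟩
    have hmem := mem_ideal_span_X_image.mp hxI
    have hx' : x.IsHomogeneous 0 := (mem_homogeneousSubmodule _ _).mp hxV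
    rw [Submodule.mem_bot]
    by_contra hx0
    obtain ⟨m, hm⟩ := Finset.nonempty_iff_ne_empty.mpr (fun h => hx0 (support_eq_empty.mp h))
    obtain ⟨i, _, hi⟩ := hmem m hm
    have hdeg : m.degree = 0 := by
      by_contra hd
      exact mem_support_iff.mp hm (hx'.coeff_eq_zero hd)
    exact hi (by rw [(Finsupp.degree_eq_zero_iff m).mp hdeg]; rfl)
  rw [hb, finrank_bot]

lemma cdim_span_X_pos {j : ℕ} (hj : 0 < j) :
    cdim (Ideal.span (MvPolynomial.X '' (Set.univ : Set (Fin n))) : Ideal (MvPolynomial (Fin n) K))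
      j = Ndim K n j := by
  unfold cdim Ndim
  have hb : homogeneousSubmodule (Fin n) K j ⊓
      (Ideal.span (MvPolynomial.X '' (Set.univ : Set (Fin n)))).restrictScalars K
        = homogeneousSubmodule (Fin n) K j := by
    rw [inf_eq_left]
    intro x hx
    have hx' : x.IsHomogeneous j := (mem_homogeneousSubmodule _ _).mp hx
    show x ∈ Ideal.span _
    rw [mem_ideal_span_X_image]
    intro m hm
    have hm0 : m ≠ 0 := by
      intro h
      have : m.degree = j := by
        by_contra hd
        exact mem_support_iff.mp hm (hx'.coeff_eq_zero hd)
      rw [h, map_zero] at this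
      omega
    obtain ⟨a, ha⟩ := Finsupp.ne_iff.mp hm0
    exact ⟨a, Set.mem_univ a, ha⟩
  rw [hb]

lemma Xreg (k : Fin n) (r : MvPolynomial (Fin n) K)
    (h : MvPolynomial.X k * r ∈ Ideal.span (MvPolynomial.X '' {t : Fin n | t.val < k.val})) :
    r ∈ Ideal.span (MvPolynomial.X '' {t : Fin n | t.val < k.val}) := by
  rw [mem_ideal_span_X_image] at h ⊢
  intro m hm
  have hm' : Finsupp.single k 1 + m ∈ (MvPolynomial.X k * r).support := by
    rw [support_X_mul]
    exact Finset.mem_map_of_mem _ hm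
  obtain ⟨i, his, hi⟩ := h _ hm'
  refine ⟨i, his, ?_⟩
  rw [Finsupp.add_apply, Finsupp.single_apply, if_neg (by intro he; subst he; simp at his)] at hi
  simpa using hi


lemma set_univ_eq : {t : Fin n | t.val < n} = (Set.univ : Set (Fin n)) :=
  Set.eq_univ_of_forall fun t => t.isLt

lemma filter_univ_eq : Finset.univ.filter (fun k : Fin n => k.val < n) = Finset.univ :=
  Finset.filter_true_of_mem fun t _ => t.isLt

lemma HS_mul_base : (1 - PowerSeries.X) ^ n * HS (⊥ : Ideal (MvPolynomial (Fin n) K)) = 1 := by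
  have h1 := HS_chain (K := K) (fun k => MvPolynomial.X k) (fun _ => 1)
    (fun k => isHomogeneous_X _ _) (fun k => X_ne_zero _)
    (fun k r h => Xreg k r h) n le_rfl
  rw [set_univ_eq, filter_univ_eq] at h1
  simp only [pow_one] at h1
  rw [Finset.prod_const, Finset.card_univ, Fintype.card_fin] at h1
  rw [← h1]
  ext j
  simp only [HS, PowerSeries.coeff_mk, PowerSeries.coeff_one]
  cases j with
  | zero => rw [Ndim_zero, cdim_span_X_zero, if_pos rfl]; norm_num
  | succ j => rw [cdim_span_X_pos (Nat.succ_pos j), sub_self, if_neg (Nat.succ_ne_zero j)]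

lemma key (g : Fin n → MvPolynomial (Fin n) K) (e : Fin n → ℕ)
    (hh : ∀ k, (g k).IsHomogeneous (e k)) (hepos : ∀ k, 0 < e k) (h0 : ∀ k, g k ≠ 0)
    (hreg : ∀ (k : Fin n) (r : MvPolynomial (Fin n) K),
      g k * r ∈ Ideal.span (g '' {t | t.val < k.val}) →
        r ∈ Ideal.span (g '' {t | t.val < k.val})) :
    homogeneousSubmodule (Fin n) K (∑ k, e k + 1)
      ≤ (Ideal.span (Set.range g)).restrictScalars K := by
  classical
  set D := ∑ k, e k with hD
  have hchain := HS_chain g e hh h0 hreg n le_rfl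
  rw [set_univ_eq, filter_univ_eq, Set.image_univ] at hchain
  set G : Fin n → PowerSeries ℤ := fun k => ∑ t ∈ Finset.range (e k), PowerSeries.X ^ t with hG
  have hfact : ∀ k : Fin n, (1 - PowerSeries.X ^ e k) = (1 - PowerSeries.X) * G k := by
    intro k
    have := geom_sum_mul (PowerSeries.X : PowerSeries ℤ) (e k)
    rw [hG]
    linear_combination this
  have hprod : (∏ k : Fin n, (1 - PowerSeries.X ^ e k))
      = (1 - PowerSeries.X) ^ n * ∏ k : Fin n, G k := by
    calc (∏ k : Fin n, (1 - PowerSeries.X ^ e k))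
        = ∏ k : Fin n, ((1 - PowerSeries.X) * G k) := Finset.prod_congr rfl fun k _ => hfact k
      _ = (∏ _k : Fin n, (1 - PowerSeries.X)) * ∏ k : Fin n, G k := Finset.prod_mul_distrib
      _ = (1 - PowerSeries.X) ^ n * ∏ k : Fin n, G k := by
          rw [Finset.prod_const, Finset.card_univ, Fintype.card_fin]
  have hHS : HS (Ideal.span (Set.range g)) = ∏ k : Fin n, G k := by
    rw [hchain, hprod, mul_comm ((1 - PowerSeries.X) ^ n), mul_assoc, HS_mul_base, mul_one]
  -- polynomial bound
  set Qp : Polynomial ℤ := ∏ k : Fin n, ∑ t ∈ Finset.range (e k), Polynomial.X ^ t with hQp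
  have hQcoe : ((Qp : Polynomial ℤ) : PowerSeries ℤ) = ∏ k : Fin n, G k := by
    rw [show ((Qp : Polynomial ℤ) : PowerSeries ℤ) = Polynomial.coeToPowerSeries.ringHom Qp from
      rfl, hQp, map_prod]
    refine Finset.prod_congr rfl fun k _ => ?_
    rw [map_sum, hG]
    refine Finset.sum_congr rfl fun t _ => ?_
    rw [map_pow, Polynomial.coeToPowerSeries.ringHom_apply, Polynomial.coe_X]
  have hdeg : Qp.natDegree ≤ D := by
    refine le_trans (Polynomial.natDegree_prod_le _ _) (Finset.sum_le_sum fun k _ => ?_)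
    refine Polynomial.natDegree_sum_le_of_forall_le _ _ fun t ht => ?_
    rw [Polynomial.natDegree_X_pow]
    exact le_of_lt (Finset.mem_range.mp ht)
  have hco : PowerSeries.coeff (D + 1) (HS (Ideal.span (Set.range g))) = 0 := by
    rw [hHS, ← hQcoe, Polynomial.coeff_coe]
    exact_mod_cast Polynomial.coeff_eq_zero_of_natDegree_lt (by omega)
  have hNc : Ndim K n (D + 1) = cdim (Ideal.span (Set.range g)) (D + 1) := by
    simp only [HS, PowerSeries.coeff_mk] at hco
    omega
  have heq : homogeneousSubmodule (Fin n) K (D + 1)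
      ⊓ (Ideal.span (Set.range g)).restrictScalars K
        = homogeneousSubmodule (Fin n) K (D + 1) :=
    Submodule.eq_of_le_of_finrank_le inf_le_left (le_of_eq hNc)
  intro x hx
  have : x ∈ homogeneousSubmodule (Fin n) K (D + 1)
      ⊓ (Ideal.span (Set.range g)).restrictScalars K := heq.symm ▸ hx
  exact this.2


lemma reg_transl {A : Type*} [CommRing A] {I : Ideal A} {g : A}
    (h : IsSMulRegular (A ⧸ (I • ⊤ : Submodule A A)) g) (r : A) (hr : g * r ∈ I) : r ∈ I := by
  have hIT : (I • ⊤ : Submodule A A) = I := by rw [smul_eq_mul, Ideal.mul_top]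
  have h1 : (Submodule.Quotient.mk (g * r) : A ⧸ (I • ⊤ : Submodule A A)) = 0 :=
    (Submodule.Quotient.mk_eq_zero _).mpr (hIT.symm ▸ hr)
  have h2 : g • (Submodule.Quotient.mk r : A ⧸ (I • ⊤ : Submodule A A)) = g • 0 := by
    rw [smul_zero, ← Submodule.Quotient.mk_smul, show g • r = g * r from rfl, h1]
  have h3 := h h2
  rw [Submodule.Quotient.mk_eq_zero, hIT] at h3
  exact h3

lemma ne_zero_step {A : Type*} [CommRing A] {I J : Ideal A} (hIJ : I ≤ J)
    (h : IsSMulRegular (A ⧸ (I • ⊤ : Submodule A A)) (0 : A))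
    (htop : (⊤ : Submodule A A) ≠ J • ⊤) : False := by
  have hsub : Subsingleton (A ⧸ (I • ⊤ : Submodule A A)) :=
    ⟨fun x y => h (by show (0:A) • x = (0:A) • y; rw [zero_smul, zero_smul])⟩
  have hI : (I • ⊤ : Submodule A A) = ⊤ := Submodule.Quotient.subsingleton_iff.mp hsub
  have hle : (⊤ : Submodule A A) ≤ J • ⊤ :=
    le_trans hI.ge (Submodule.smul_mono_left hIJ)
  exact htop (eq_top_iff.mpr hle).symm

lemma ofList_take_eq (f : Fin n → MvPolynomial (Fin n) K) (k : ℕ) :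
    Ideal.ofList ((List.ofFn f).take k) = Ideal.span (f '' {t : Fin n | t.val < k}) := by
  unfold Ideal.ofList
  congr 1
  ext x
  simp only [Set.mem_setOf_eq, Set.mem_image, List.mem_iff_getElem]
  constructor
  · rintro ⟨i, hi, rfl⟩
    have hi' : i < n := by
      simp only [List.length_take, List.length_ofFn] at hi
      omega
    have hik : i < k := by
      simp only [List.length_take, List.length_ofFn] at hi
      omega
    refine ⟨⟨i, hi'⟩, hik, ?_⟩
    rw [List.getElem_take, List.getElem_ofFn]
  · rintro ⟨t, htk, rfl⟩
    refine ⟨t.val, ?_, ?_⟩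
    · simp only [List.length_take, List.length_ofFn]
      omega
    · rw [List.getElem_take, List.getElem_ofFn]


end Stmt11Aux

open Stmt11Aux in
/-- fix an index `i` and assume no `m k` is a pure power of `x_i`
(i.e. `m k ≠ x_i^{d k}` for all `k`). If `a i = 0`, then `f 1, …, f n` is not a regular
sequence. -/
theorem stmt11 {K : Type*} [Field K] {n : ℕ} (hn : 0 < n)
    (d : Fin n → ℕ) (hd : ∀ i, 0 < d i)
    (a b : Fin n → K)
    (m : Fin n → (Fin n →₀ ℕ))
    (hmdeg : ∀ i, (∑ j, m i j) = d i)
    (hmne : ∀ i, m i ≠ Finsupp.single i (d i))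
    (f : Fin n → MvPolynomial (Fin n) K)
    (hf : ∀ i, f i = monomial (Finsupp.single i (d i)) (a i) - monomial (m i) (b i))
    (i : Fin n)
    (hpure : ∀ k : Fin n, m k ≠ Finsupp.single i (d k))
    (hai : a i = 0) :
    ¬ RingTheory.Sequence.IsRegular (MvPolynomial (Fin n) K) (List.ofFn f) := by
  intro hregseq
  classical
  -- basic facts about the f's
  have hfhomog : ∀ k, (f k).IsHomogeneous (d k) := by
    intro k
    rw [hf k]
    refine IsHomogeneous.sub (isHomogeneous_monomial _ (degree_single k (d k))) (isHomogeneous_monomial _ ?_)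
    rw [degree_eq_sum_univ]
    exact hmdeg k
  -- every m k involves a variable other than i
  have hother : ∀ k, ∃ l, l ≠ i ∧ m k l ≠ 0 := by
    intro k
    by_contra hno
    push_neg at hno
    apply hpure k
    have hmki : m k i = d k := by
      rw [← hmdeg k, Finset.sum_eq_single i (fun l _ hl => hno l hl) (by simp)]
    ext l
    by_cases hl : l = i
    · subst hl; rw [hmki, Finsupp.single_eq_same]
    · rw [hno l hl, Finsupp.single_eq_of_ne' (Ne.symm hl)]
  -- regularity data
  have hlen : (List.ofFn f).length = n := List.length_ofFn
  have hgetf : ∀ (k : Fin n), (List.ofFn f)[k.val]'(by omega) = f k := by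
    intro k
    rw [List.getElem_ofFn]
  have hsreg : ∀ k : Fin n, IsSMulRegular
      ((MvPolynomial (Fin n) K) ⧸
        (Ideal.span (f '' {t : Fin n | t.val < k.val}) •
          (⊤ : Submodule (MvPolynomial (Fin n) K) (MvPolynomial (Fin n) K)))) (f k) := by
    intro k
    have := hregseq.toIsWeaklyRegular.regular_mod_prev k.val (by omega)
    rw [ofList_take_eq f k.val] at this
    rwa [hgetf k] at this
  have hne : ∀ k : Fin n, f k ≠ 0 := by
    intro k hk0
    refine ne_zero_step (I := Ideal.span (f '' {t : Fin n | t.val < k.val}))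
      (J := Ideal.ofList (List.ofFn f)) ?_ (hk0 ▸ hsreg k) hregseq.top_ne_smul
    rw [← ofList_take_eq f k.val]
    exact Ideal.span_mono (fun x hx => List.mem_of_mem_take hx)
  have hreg : ∀ (k : Fin n) (r : MvPolynomial (Fin n) K),
      f k * r ∈ Ideal.span (f '' {t | t.val < k.val}) →
        r ∈ Ideal.span (f '' {t | t.val < k.val}) :=
    fun k => reg_transl (hsreg k)
  -- apply the Hilbert series argument
  have hkey := key f d hfhomog hd hne hreg
  set D := ∑ k, d k with hD
  have hmem : MvPolynomial.X i ^ (D + 1) ∈ Ideal.span (Set.range f) := by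
    have : (MvPolynomial.X i ^ (D + 1) : MvPolynomial (Fin n) K)
        ∈ homogeneousSubmodule (Fin n) K (D + 1) :=
      (mem_homogeneousSubmodule _ _).mpr (by
        have h := (isHomogeneous_X K i).pow (D + 1)
        rwa [one_mul] at h)
    exact hkey this
  -- evaluation at the point eᵢ
  set pt : Fin n → K := fun l => if l = i then 1 else 0 with hpt
  have hev0 : ∀ k, eval pt (f k) = 0 := by
    intro k
    rw [hf k, map_sub, eval_monomial, eval_monomial]
    have h2 : (m k).prod (fun l e => pt l ^ e) = 0 := by
      obtain ⟨l, hli, hl0⟩ := hother k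
      refine Finset.prod_eq_zero (Finsupp.mem_support_iff.mpr hl0) ?_
      rw [hpt]
      simp only [if_neg hli]
      exact zero_pow hl0
    rw [h2, mul_zero, sub_zero]
    by_cases hk : k = i
    · subst hk; rw [hai, zero_mul]
    · have h1 : (Finsupp.single k (d k)).prod (fun l e => pt l ^ e) = pt k ^ d k :=
        Finsupp.prod_single_index (pow_zero _)
      rw [h1, hpt]
      simp only [if_neg hk]
      rw [zero_pow (hd k).ne', mul_zero]
  have hevmem : eval pt (MvPolynomial.X i ^ (D + 1) : MvPolynomial (Fin n) K) = 0 := by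
    have hsub : Ideal.span (Set.range f) ≤ RingHom.ker (eval pt) := by
      rw [Ideal.span_le]
      rintro x ⟨k, rfl⟩
      exact hev0 k
    exact hsub hmem
  rw [map_pow, eval_X] at hevmem
  have hpti : pt i = 1 := by simp [hpt]
  rw [hpti, one_pow] at hevmem
  exact one_ne_zero hevmem
end
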